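/- arXiv:2411.01501 — 3 statements merged into one kernel-verified Lean document; each statement's English description precedes it below -/
import Mathlib

section
/- Let f : ℝ → ℝ be continuously differentiable, and suppose |f'(x) - f'(y)| ≤ ρ(|x-y|) for all x, y, where ρ is a concave modulus of continuity with ρ(0) = 0. Then for all x, y ∈ ℝ and all α ≠ 0 with |α| ≥ |x-y|, |Δ_α f(x) - Δ_α f(y)| ≤ ρ(|x-y|), where Δ_α f(x) = (f(x) - f(x-α))/α. -/
/-!
Writing `d = y - x`, the difference `Δ_α f(x) - Δ_α f(y)` is the difference quotient over
`[x - α, x]` of `g t = f t - f (t + d)`. Since `|g'| ≤ ρ(|d|)` everywhere, the mean value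
inequality bounds that quotient by `ρ(|x - y|)`.
-/

theorem norm_sub_shift_sub_le {F : Type*} [NormedAddCommGroup F] [NormedSpace ℝ F]
    {f : ℝ → F} (hf : Differentiable ℝ f) {C d : ℝ}
    (hC : ∀ t, ‖deriv f t - deriv f (t + d)‖ ≤ C) (a b : ℝ) :
    ‖(f a - f (a + d)) - (f b - f (b + d))‖ ≤ C * ‖a - b‖ := by
  have hshift : Differentiable ℝ fun t => f (t + d) :=
    hf.comp (differentiable_id.add_const d)
  have hderiv : ∀ t, deriv (fun t => f t - f (t + d)) t = deriv f t - deriv f (t + d) := by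
    intro t
    rw [deriv_fun_sub (hf t) (hshift t), deriv_comp_add_const]
  exact convex_univ.norm_image_sub_le_of_norm_deriv_le (fun t _ => (hf.sub hshift) t)
    (fun t _ => (hderiv t).symm ▸ hC t) (Set.mem_univ b) (Set.mem_univ a)

theorem stmt_5_general (f ρ : ℝ → ℝ) (hf : ContDiff ℝ 1 f)
    (hmod : ∀ x y : ℝ, |deriv f x - deriv f y| ≤ ρ |x - y|) :
    ∀ x y α : ℝ, α ≠ 0 → |x - y| ≤ |α| →
      |(f x - f (x - α)) / α - (f y - f (y - α)) / α| ≤ ρ |x - y| := by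
  intro x y α hα _
  have hshift : ∀ t, |deriv f t - deriv f (t + (y - x))| ≤ ρ |x - y| := fun t => by
    simpa [abs_sub_comm] using hmod t (t + (y - x))
  have hbound := norm_sub_shift_sub_le (hf.differentiable one_ne_zero) hshift x (x - α)
  simp only [Real.norm_eq_abs, sub_sub_cancel, add_sub_cancel] at hbound
  have hquot : (f x - f (x - α)) / α - (f y - f (y - α)) / α
      = ((f x - f y) - (f (x - α) - f (x - α + (y - x)))) / α := by
    rw [show x - α + (y - x) = y - α by ring]
    ring
  rw [hquot, abs_div, div_le_iff₀ (abs_pos.mpr hα)]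
  exact hbound

theorem stmt_5 (f ρ : ℝ → ℝ) (hf : ContDiff ℝ 1 f)
    (hρ0 : ρ 0 = 0) (hρmono : MonotoneOn ρ (Set.Ici 0))
    (hρconc : ConcaveOn ℝ (Set.Ici 0) ρ)
    (hρnonneg : ∀ x, 0 ≤ x → 0 ≤ ρ x)
    (hmod : ∀ x y : ℝ, |deriv f x - deriv f y| ≤ ρ |x - y|) :
    ∀ x y α : ℝ, α ≠ 0 → |x - y| ≤ |α| →
      |(f x - f (x - α)) / α - (f y - f (y - α)) / α| ≤ ρ |x - y| :=
  stmt_5_general f ρ hf hmod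
end

section
/- Let ρ : [0,∞) → [0,∞) be concave, nondecreasing, with ρ(0) = 0 and twice differentiable on (0,∞) with ρ'' nondecreasing on (0,∞). Then for every z > 0, -∫₀^z (δ_α ρ(z) + δ_{-α} ρ(z))·α^{-2} dα ≤ (z/2)·ρ''(z), where δ_α ρ(z) = ρ(z) - ρ(z-α) and δ_{-α} ρ(z) = ρ(z) - ρ(z+α). -/
/-
Concavity gives `ρ (z + α) ≤ ρ z + α ρ' z`. Since `ρ''` is nondecreasing, `ρ'` is convex, and a
second-order Taylor bound gives `ρ (z - α) ≤ ρ z - α ρ' z + (α² / 2) ρ'' z`. Adding, the integrand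
is at least `-ρ'' z / 2` on `(0, z)`, and integrating gives the claim. Since a non-integrable
integrand has integral `0`, the integrand must also be bounded above: by `-2 ρ'' (z / 2)` for
`α ≤ z / 2` (tangent lines at `z ± α` and convexity of `ρ'`), and by concavity on `[0, 2z]` for `α ≥ z / 2`.
-/

open Set MeasureTheory

lemma ConcaveOn.le_add_mul_sub_of_hasDerivAt {S : Set ℝ} {f : ℝ → ℝ} {f' x y : ℝ}
    (hf : ConcaveOn ℝ S f) (hx : x ∈ S) (hy : y ∈ S) (hd : HasDerivAt f f' x) :
    f y ≤ f x + f' * (y - x) := by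
  rcases lt_trichotomy x y with hxy | rfl | hyx
  · have := hf.slope_le_of_hasDerivAt hx hy hxy hd
    rw [slope_def_field, div_le_iff₀ (sub_pos.2 hxy)] at this
    linarith
  · simp
  · have := hf.le_slope_of_hasDerivAt hy hx hyx hd
    rw [slope_def_field, le_div_iff₀ (sub_pos.2 hyx)] at this
    linarith

lemma convexOn_of_hasDerivAt_of_monotoneOn {D : Set ℝ} {f f' : ℝ → ℝ} (hD : Convex ℝ D)
    (hDo : IsOpen D) (hf : ∀ x ∈ D, HasDerivAt f (f' x) x) (hf' : MonotoneOn f' D) :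
    ConvexOn ℝ D f := by
  refine MonotoneOn.convexOn_of_deriv hD (fun x hx ↦ (hf x hx).continuousAt.continuousWithinAt)
    ?_ ?_ <;> rw [hDo.interior_eq]
  · exact fun x hx ↦ (hf x hx).differentiableAt.differentiableWithinAt
  · exact hf'.congr fun x hx ↦ ((hf x hx).deriv).symm

lemma le_sub_mul_add_sq_mul_of_convexOn_deriv {D : Set ℝ} {f f' f'' : ℝ → ℝ} {x h : ℝ}
    (hf : ∀ y ∈ D, HasDerivAt f (f' y) y) (hf' : ∀ y ∈ D, HasDerivAt f' (f'' y) y)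
    (hconv : ConvexOn ℝ D f') (hh : 0 ≤ h) (hxh : Icc (x - h) x ⊆ D) :
    f (x - h) ≤ f x - h * f' x + h ^ 2 / 2 * f'' x := by
  set g : ℝ → ℝ := fun t ↦ f t - f' x * t - f'' x * (x - t) ^ 2 / 2
  have hg : ∀ t ∈ D, HasDerivAt g (f' t - f' x + f'' x * (x - t)) t := by
    intro t ht
    have := ((hf t ht).sub ((hasDerivAt_id' t).const_mul (f' x))).sub
      ((((hasDerivAt_id' t).const_sub x).fun_pow 2).const_mul (f'' x) |>.div_const 2)
    exact this.congr_deriv (by push_cast; ring)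
  have hx : x ∈ D := hxh ⟨by linarith, le_rfl⟩
  have hg_mono : MonotoneOn g (Icc (x - h) x) := by
    refine monotoneOn_of_hasDerivWithinAt_nonneg (convex_Icc _ _)
      (fun t ht ↦ (hg t (hxh ht)).continuousAt.continuousWithinAt)
      (fun t ht ↦ (hg t (hxh (interior_subset ht))).hasDerivWithinAt) ?_
    rw [interior_Icc]
    rintro t ⟨hxt, htx⟩
    have := hconv.slope_le_of_hasDerivAt (hxh ⟨hxt.le, htx.le⟩) hx htx (hf' x hx)
    rw [slope_def_field, div_le_iff₀ (sub_pos.2 htx)] at this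
    linarith
  have := hg_mono ⟨le_rfl, by linarith⟩ ⟨by linarith, le_rfl⟩ (by linarith)
  simp only [g, sub_sub_cancel] at this
  nlinarith

lemma intervalIntegrable_of_continuousOn_Ioo {f : ℝ → ℝ} {a b : ℝ} (hab : a ≤ b)
    (hc : ContinuousOn f (Ioo a b)) (hbdd : BddAbove (f '' Ioo a b))
    (hbdd' : BddBelow (f '' Ioo a b)) : IntervalIntegrable f volume a b := by
  obtain ⟨M, hM⟩ := hbdd
  obtain ⟨m, hm⟩ := hbdd'
  rw [intervalIntegrable_iff_integrableOn_Ioo_of_le hab]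
  refine .of_bound measure_Ioo_lt_top (hc.aestronglyMeasurable measurableSet_Ioo) (max |m| |M|)
    (ae_restrict_of_forall_mem measurableSet_Ioo fun x hx ↦ ?_)
  exact abs_le_max_abs_abs (hm (mem_image_of_mem f hx)) (hM (mem_image_of_mem f hx))

section SecondDifference

variable {ρ ρ' ρ'' : ℝ → ℝ} {z α : ℝ}

lemma neg_sq_mul_le_second_difference (hconc : ConcaveOn ℝ (Ici 0) ρ)
    (hd1 : ∀ x, 0 < x → HasDerivAt ρ (ρ' x) x) (hd2 : ∀ x, 0 < x → HasDerivAt ρ' (ρ'' x) x)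
    (hconv : ConvexOn ℝ (Ioi 0) ρ') (hz : 0 < z) (hα : 0 ≤ α) (hαz : α < z) :
    -(α ^ 2 / 2 * ρ'' z) ≤ (ρ z - ρ (z - α)) + (ρ z - ρ (z + α)) := by
  have htangent := hconc.le_add_mul_sub_of_hasDerivAt (y := z + α) hz.le
    (mem_Ici.2 (by linarith)) (hd1 z hz)
  have htaylor := le_sub_mul_add_sq_mul_of_convexOn_deriv (D := Ioi 0) (x := z) hd1 hd2 hconv hα
    fun t ht ↦ show 0 < t by linarith [ht.1]
  linarith

lemma second_difference_le_neg_sq_mul (hconc : ConcaveOn ℝ (Ici 0) ρ)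
    (hd1 : ∀ x, 0 < x → HasDerivAt ρ (ρ' x) x) (hd2 : ∀ x, 0 < x → HasDerivAt ρ' (ρ'' x) x)
    (hconv : ConvexOn ℝ (Ioi 0) ρ') (hmono'' : MonotoneOn ρ'' (Ioi 0)) (hz : 0 < z)
    (hα : 0 < α) (hαz : α ≤ z / 2) :
    (ρ z - ρ (z - α)) + (ρ z - ρ (z + α)) ≤ -(2 * α ^ 2 * ρ'' (z / 2)) := by
  have hzα : 0 < z - α := by linarith
  have hleft := hconc.le_add_mul_sub_of_hasDerivAt (x := z - α) (y := z) hzα.le hz.le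
    (hd1 _ hzα)
  have hright := hconc.le_add_mul_sub_of_hasDerivAt (x := z + α) (y := z)
    (mem_Ici.2 (by linarith)) hz.le (hd1 _ (by linarith))
  have hslope := hconv.le_slope_of_hasDerivAt (y := z + α) hzα (mem_Ioi.2 (by linarith))
    (by linarith) (hd2 _ hzα)
  rw [slope_def_field, le_div_iff₀ (by linarith)] at hslope
  have hmono := hmono'' (mem_Ioi.2 (by linarith)) hzα (by linarith : z / 2 ≤ z - α)
  nlinarith

lemma second_difference_le_of_concaveOn (hconc : ConcaveOn ℝ (Ici 0) ρ) (hα : 0 ≤ α)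
    (hαz : α ≤ z) :
    (ρ z - ρ (z - α)) + (ρ z - ρ (z + α)) ≤ 2 * ρ z - min (ρ 0) (ρ z) - min (ρ z) (ρ (2 * z)) := by
  have hz : (0 : ℝ) ≤ z := hα.trans hαz
  have hleft := hconc.min_le_of_mem_Icc (x := 0) (y := z) (z := z - α) (mem_Ici.2 le_rfl) hz
    ⟨by linarith, by linarith⟩
  have hright := hconc.min_le_of_mem_Icc (x := z) (y := 2 * z) (z := z + α) hz
    (mem_Ici.2 (by linarith)) ⟨by linarith, by linarith⟩
  linarith

lemma bddAbove_second_difference_div_sq (hconc : ConcaveOn ℝ (Ici 0) ρ)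
    (hd1 : ∀ x, 0 < x → HasDerivAt ρ (ρ' x) x) (hd2 : ∀ x, 0 < x → HasDerivAt ρ' (ρ'' x) x)
    (hconv : ConvexOn ℝ (Ioi 0) ρ') (hmono'' : MonotoneOn ρ'' (Ioi 0)) (hz : 0 < z) :
    BddAbove ((fun α ↦ ((ρ z - ρ (z - α)) + (ρ z - ρ (z + α))) / α ^ 2) '' Ioo 0 z) := by
  set K := 2 * ρ z - min (ρ 0) (ρ z) - min (ρ z) (ρ (2 * z))
  have hK : 0 ≤ K := by
    linarith [min_le_right (ρ 0) (ρ z), min_le_left (ρ z) (ρ (2 * z))]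
  refine ⟨max (-(2 * ρ'' (z / 2))) (4 * K / z ^ 2), forall_mem_image.2 fun α ⟨hα, hαz⟩ ↦ ?_⟩
  rw [div_le_iff₀ (by positivity)]
  rcases le_or_gt α (z / 2) with hnear | hfar
  · have := second_difference_le_neg_sq_mul hconc hd1 hd2 hconv hmono'' hz hα hnear
    nlinarith [le_max_left (-(2 * ρ'' (z / 2))) (4 * K / z ^ 2), sq_nonneg α]
  · have := second_difference_le_of_concaveOn hconc hα.le hαz.le
    have h4K : K ≤ 4 * K / z ^ 2 * α ^ 2 := by
      rw [div_mul_eq_mul_div, le_div_iff₀ (by positivity)]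
      nlinarith [mul_le_mul_of_nonneg_left (by nlinarith : z ^ 2 ≤ 4 * α ^ 2) hK]
    nlinarith [le_max_right (-(2 * ρ'' (z / 2))) (4 * K / z ^ 2), sq_nonneg α]

lemma continuousOn_second_difference_div_sq (hρ : ContinuousOn ρ (Ioi 0)) :
    ContinuousOn (fun α ↦ ((ρ z - ρ (z - α)) + (ρ z - ρ (z + α))) / α ^ 2) (Ioo 0 z) := by
  have hsub : ContinuousOn (fun α ↦ ρ (z - α)) (Ioo 0 z) :=
    hρ.comp (by fun_prop) fun α hα ↦ show 0 < z - α by linarith [hα.2]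
  have hadd : ContinuousOn (fun α ↦ ρ (z + α)) (Ioo 0 z) :=
    hρ.comp (by fun_prop) fun α hα ↦ show 0 < z + α by linarith [hα.1, hα.2]
  exact ((continuousOn_const.sub hsub).add (continuousOn_const.sub hadd)).div (by fun_prop)
    fun α hα ↦ pow_ne_zero 2 hα.1.ne'

end SecondDifference

theorem stmt_13_general (ρ ρ' ρ'' : ℝ → ℝ)
    (hconc : ConcaveOn ℝ (Set.Ici 0) ρ)
    (hd1 : ∀ x, 0 < x → HasDerivAt ρ (ρ' x) x)
    (hd2 : ∀ x, 0 < x → HasDerivAt ρ' (ρ'' x) x)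
    (hmono'' : MonotoneOn ρ'' (Set.Ioi 0)) :
    ∀ z : ℝ, 0 < z →
      -∫ α in (0:ℝ)..z, ((ρ z - ρ (z - α)) + (ρ z - ρ (z + α))) / α^2
        ≤ z / 2 * ρ'' z := by
  intro z hz
  have hconv : ConvexOn ℝ (Ioi 0) ρ' :=
    convexOn_of_hasDerivAt_of_monotoneOn (convex_Ioi 0) isOpen_Ioi hd2 hmono''
  have hlow : ∀ α ∈ Ioo 0 z, -ρ'' z / 2 ≤ ((ρ z - ρ (z - α)) + (ρ z - ρ (z + α))) / α ^ 2 := by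
    rintro α ⟨hα, hαz⟩
    rw [le_div_iff₀ (by positivity)]
    linarith [neg_sq_mul_le_second_difference hconc hd1 hd2 hconv hz hα.le hαz]
  have hint := intervalIntegrable_of_continuousOn_Ioo hz.le
    (continuousOn_second_difference_div_sq fun x hx ↦ (hd1 x hx).continuousAt.continuousWithinAt)
    (bddAbove_second_difference_div_sq hconc hd1 hd2 hconv hmono'' hz)
    ⟨_, forall_mem_image.2 hlow⟩
  calc _ ≤ -∫ _ in (0:ℝ)..z, -ρ'' z / 2 := neg_le_neg <|
        intervalIntegral.integral_mono_on_of_le_Ioo hz.le intervalIntegrable_const hint hlow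
    _ = z / 2 * ρ'' z := by
      rw [intervalIntegral.integral_const, smul_eq_mul]
      ring

theorem stmt_13 (ρ ρ' ρ'' : ℝ → ℝ)
    (hconc : ConcaveOn ℝ (Set.Ici 0) ρ)
    (hmono : MonotoneOn ρ (Set.Ici 0))
    (hnonneg : ∀ x, 0 ≤ x → 0 ≤ ρ x) (h0 : ρ 0 = 0)
    (hd1 : ∀ x, 0 < x → HasDerivAt ρ (ρ' x) x)
    (hd2 : ∀ x, 0 < x → HasDerivAt ρ' (ρ'' x) x)
    (hmono'' : MonotoneOn ρ'' (Set.Ioi 0)) :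
    ∀ z : ℝ, 0 < z →
      -∫ α in (0:ℝ)..z, ((ρ z - ρ (z - α)) + (ρ z - ρ (z + α))) / α^2
        ≤ z / 2 * ρ'' z :=
  stmt_13_general ρ ρ' ρ'' hconc hd1 hd2 hmono''
end

section
/- Let ρ : [0,∞) → [0,∞) be concave, nondecreasing, differentiable on (0,∞) with ρ(0) = 0, and suppose ρ(2z) ≤ (3/2)·ρ(z) for a given z > 0. Then ∫_z^∞ (ρ(α+z) - ρ(α) - ρ(z))·α^{-2} dα ≤ -(1/2)·ρ(z)/z + ∫_z^∞ (ρ'(h+z) - ρ'(h))/h dh. -/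
/-!
Write `F α = ρ (α + z) - ρ α - ρ z`. Since `d/dα (-F α / α) = F α / α² - F' α / α` and `F` is
bounded (`-ρ z ≤ F ≤ 0` by monotonicity and subadditivity of `ρ`), integrating over `(z, ∞)` gives
`∫ F / α² = F z / z + ∫ F' / α`; the derivative `F'` is integrable because it is nonpositive
(`ρ'` is antitone) while `F` is bounded below. Finally `F z = ρ (2z) - 2 ρ z ≤ -ρ z / 2`.
-/

open MeasureTheory Filter Set Topology

theorem ConcaveOn.map_add_sub_le {s : Set ℝ} {f : ℝ → ℝ} (hf : ConcaveOn ℝ s f)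
    {x y d : ℝ} (hx : x ∈ s) (hyd : y + d ∈ s) (hxy : x ≤ y) (hd : 0 ≤ d) :
    f (y + d) - f y ≤ f (x + d) - f x := by
  rcases hxy.eq_or_lt with rfl | hxy
  · rfl
  rcases hd.eq_or_lt with rfl | hd
  · simp
  -- `y` and `x + d` are the convex combinations of `x` and `y + d` with swapped weights.
  have hL : 0 < y + d - x := by linarith
  have hsum : d / (y + d - x) + (y - x) / (y + d - x) = 1 := by field_simp; ring
  have hy := hf.2 hx hyd (div_pos hd hL).le (div_pos (sub_pos.2 hxy) hL).le hsum
  have hxd := hf.2 hx hyd (div_pos (sub_pos.2 hxy) hL).le (div_pos hd hL).le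
    (by rw [add_comm, hsum])
  simp only [smul_eq_mul] at hy hxd
  rw [show d / (y + d - x) * x + (y - x) / (y + d - x) * (y + d) = y by field_simp; ring] at hy
  rw [show (y - x) / (y + d - x) * x + d / (y + d - x) * (y + d) = x + d by
    field_simp; ring] at hxd
  linear_combination hy + hxd - (f x + f (y + d)) * hsum

theorem ConcaveOn.antitoneOn_of_hasDerivAt {s : Set ℝ} {f f' : ℝ → ℝ} (hf : ConcaveOn ℝ s f)
    (hd : ∀ x ∈ s, HasDerivAt f (f' x) x) : AntitoneOn f' s := by
  intro x hx y hy hxy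
  rw [← (hd x hx).deriv, ← (hd y hy).deriv]
  exact hf.antitoneOn_deriv (fun x hx => (hd x hx).differentiableAt) hx hy hxy

theorem AntitoneOn.exists_tendsto_atTop {f : ℝ → ℝ} {a m : ℝ} (hf : AntitoneOn f (Ici a))
    (hm : ∀ x ∈ Ici a, m ≤ f x) : ∃ l, Tendsto f atTop (𝓝 l) := by
  have hanti : Antitone fun x => f (max x a) := fun x y hxy =>
    hf (le_max_right x a) (le_max_right y a) (max_le_max hxy le_rfl)
  have hbdd : BddBelow (range fun x => f (max x a)) :=
    ⟨m, by rintro _ ⟨x, rfl⟩; exact hm _ (le_max_right x a)⟩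
  refine ⟨_, (tendsto_atTop_ciInf hanti hbdd).congr' ?_⟩
  filter_upwards [eventually_ge_atTop a] with x hx
  rw [max_eq_left hx]

theorem integrableOn_Ioi_deriv_of_nonpos_of_bddBelow {g g' : ℝ → ℝ} {a m : ℝ}
    (hderiv : ∀ x ∈ Ici a, HasDerivAt g (g' x) x) (hg' : ∀ x ∈ Ioi a, g' x ≤ 0)
    (hm : ∀ x ∈ Ici a, m ≤ g x) : IntegrableOn g' (Ioi a) := by
  have hanti : AntitoneOn g (Ici a) := by
    refine antitoneOn_of_deriv_nonpos (convex_Ici a)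
      (fun x hx => (hderiv x hx).continuousAt.continuousWithinAt) ?_ ?_ <;>
      rw [interior_Ici] <;> intro x hx
    · exact (hderiv x (mem_Ici_of_Ioi hx)).differentiableAt.differentiableWithinAt
    · rw [(hderiv x (mem_Ici_of_Ioi hx)).deriv]
      exact hg' x hx
  obtain ⟨l, hl⟩ := hanti.exists_tendsto_atTop hm
  exact integrableOn_Ioi_deriv_of_nonpos' hderiv hg' hl

theorem MeasureTheory.IntegrableOn.div_id_Ioi {g : ℝ → ℝ} {a : ℝ} (ha : 0 < a)
    (hg : IntegrableOn g (Ioi a)) : IntegrableOn (fun x => g x / x) (Ioi a) := by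
  simp_rw [div_eq_mul_inv]
  refine hg.mul_bdd (c := a⁻¹) ?_ ?_
  · exact (continuousOn_inv₀.mono fun x (hx : a < x) => (ha.trans hx).ne').aestronglyMeasurable
      measurableSet_Ioi
  · filter_upwards [ae_restrict_mem measurableSet_Ioi] with x (hx : a < x)
    rw [norm_inv, Real.norm_of_nonneg (ha.trans hx).le]
    exact inv_anti₀ ha hx.le

theorem integrableOn_Ioi_div_sq_of_abs_le {F : ℝ → ℝ} {a C : ℝ} (ha : 0 < a)
    (hF : ContinuousOn F (Ioi a)) (hC : ∀ x ∈ Ioi a, |F x| ≤ C) :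
    IntegrableOn (fun x => F x / x ^ 2) (Ioi a) := by
  have hsq : IntegrableOn (fun x : ℝ => (x ^ 2)⁻¹) (Ioi a) := by
    refine (integrableOn_Ioi_rpow_of_lt (by norm_num : (-2 : ℝ) < -1) ha).congr_fun
      (fun x (hx : a < x) => ?_) measurableSet_Ioi
    dsimp only
    rw [Real.rpow_neg (ha.trans hx).le, Real.rpow_two]
  simp_rw [div_eq_mul_inv]
  exact hsq.bdd_mul (hF.aestronglyMeasurable measurableSet_Ioi)
    ((ae_restrict_mem measurableSet_Ioi).mono fun x hx => hC x hx)

theorem integral_Ioi_div_sq_eq {F F' : ℝ → ℝ} {a C : ℝ} (ha : 0 < a)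
    (hF : ∀ x ∈ Ici a, HasDerivAt F (F' x) x) (hC : ∀ x ∈ Ici a, |F x| ≤ C)
    (hF' : IntegrableOn F' (Ioi a)) :
    ∫ x in Ioi a, F x / x ^ 2 = F a / a + ∫ x in Ioi a, F' x / x := by
  have hint : IntegrableOn (fun x => F x / x ^ 2) (Ioi a) :=
    integrableOn_Ioi_div_sq_of_abs_le ha
      (fun x hx => (hF x (mem_Ici_of_Ioi hx)).continuousAt.continuousWithinAt)
      fun x hx => hC x (mem_Ici_of_Ioi hx)
  have hderiv : ∀ x ∈ Ici a, HasDerivAt (fun x => -F x / x) (F x / x ^ 2 - F' x / x) x := by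
    intro x hx
    have hx0 : x ≠ 0 := (ha.trans_le hx).ne'
    refine ((hF x hx).fun_neg.fun_div (hasDerivAt_id x) hx0).congr_deriv ?_
    simp only [id_eq]
    field_simp
    ring
  have hlim : Tendsto (fun x => -F x / x) atTop (𝓝 0) := by
    refine squeeze_zero_norm' ?_ ((tendsto_const_nhds (x := C)).div_atTop tendsto_id)
    filter_upwards [eventually_ge_atTop a] with x hx
    rw [norm_div, norm_neg, Real.norm_eq_abs, Real.norm_of_nonneg (ha.trans_le hx).le, id]
    exact div_le_div_of_nonneg_right (hC x hx) (ha.trans_le hx).le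
  have := integral_Ioi_of_hasDerivAt_of_tendsto' hderiv (hint.sub (hF'.div_id_Ioi ha)) hlim
  rw [integral_sub hint (hF'.div_id_Ioi ha), neg_div, sub_neg_eq_add, zero_add] at this
  linarith

theorem stmt_14_general (ρ ρ' : ℝ → ℝ)
    (hconc : ConcaveOn ℝ (Set.Ici 0) ρ)
    (hmono : MonotoneOn ρ (Set.Ici 0))
    (h0 : ρ 0 = 0)
    (hd : ∀ x, 0 < x → HasDerivAt ρ (ρ' x) x)
    (z : ℝ) (hz : 0 < z) (hdoub : ρ (2 * z) ≤ (3 / 2) * ρ z) :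
    ∫ α in Set.Ioi z, (ρ (α + z) - ρ α - ρ z) / α^2
      ≤ -(1 / 2) * ρ z / z + ∫ h in Set.Ioi z, (ρ' (h + z) - ρ' h) / h := by
  have hderiv : ∀ α ∈ Ici z,
      HasDerivAt (fun α => ρ (α + z) - ρ α - ρ z) (ρ' (α + z) - ρ' α) α := fun α hα =>
    (((hd _ (by linarith [mem_Ici.1 hα])).comp_add_const α z).sub
      (hd α (hz.trans_le hα))).sub_const _
  have hderiv_nonpos : ∀ α ∈ Ioi z, ρ' (α + z) - ρ' α ≤ 0 := fun α (hα : z < α) =>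
    sub_nonpos.2 <| (hconc.subset Ioi_subset_Ici_self (convex_Ioi 0)).antitoneOn_of_hasDerivAt
      (fun x hx => hd x hx) (mem_Ioi.2 (hz.trans hα)) (mem_Ioi.2 (by linarith)) (by linarith)
  have hlower : ∀ α ∈ Ici z, -ρ z ≤ ρ (α + z) - ρ α - ρ z := fun α (hα : z ≤ α) => by
    linarith [hmono (mem_Ici.2 (hz.le.trans hα)) (mem_Ici.2 (by linarith))
      (by linarith : α ≤ α + z)]
  have hupper : ∀ α ∈ Ici z, ρ (α + z) - ρ α - ρ z ≤ 0 := fun α (hα : z ≤ α) => by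
    have := hconc.map_add_sub_le self_mem_Ici (mem_Ici.2 (by linarith)) (hz.le.trans hα) hz.le
    rw [zero_add, h0] at this
    linarith
  have hρz : 0 ≤ ρ z := h0 ▸ hmono self_mem_Ici (mem_Ici.2 hz.le) hz.le
  rw [integral_Ioi_div_sq_eq hz hderiv
    (fun α hα => abs_le.2 ⟨hlower α hα, (hupper α hα).trans hρz⟩)
    (integrableOn_Ioi_deriv_of_nonpos_of_bddBelow hderiv hderiv_nonpos hlower)]
  gcongr
  rw [← two_mul]
  linarith

theorem stmt_14 (ρ ρ' : ℝ → ℝ)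
    (hconc : ConcaveOn ℝ (Set.Ici 0) ρ)
    (hmono : MonotoneOn ρ (Set.Ici 0))
    (hnonneg : ∀ x, 0 ≤ x → 0 ≤ ρ x) (h0 : ρ 0 = 0)
    (hd : ∀ x, 0 < x → HasDerivAt ρ (ρ' x) x)
    (z : ℝ) (hz : 0 < z) (hdoub : ρ (2 * z) ≤ (3 / 2) * ρ z) :
    ∫ α in Set.Ioi z, (ρ (α + z) - ρ α - ρ z) / α^2
      ≤ -(1 / 2) * ρ z / z + ∫ h in Set.Ioi z, (ρ' (h + z) - ρ' h) / h :=
  stmt_14_general ρ ρ' hconc hmono h0 hd z hz hdoub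
end
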